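/- Let F(x₁) = x₁⁴/4 + x₁³/3 − x₁², so F'(x₁) = x₁(x₁−1)(x₁+2), let H(x₁,x₂) = x₂²/2 + F(x₁), and define the planar vector field b₁(x₁,x₂) = ( x₂ − F'(x₁)(H(x₁,x₂)+1), −F'(x₁) − x₂(H(x₁,x₂)+1) ). Let U(x₁,x₂) = H(x₁,x₂)²/2 + H(x₁,x₂) and l(x₁,x₂) = (x₂, −F'(x₁)). Then: (i) ⟨∇U(x), l(x)⟩ = 0 for all x ∈ ℝ²; (ii) b₁(x) = −∇U(x) + l(x) for all x ∈ ℝ²; (iii) ⟨∇H(x), b₁(x)⟩ = −(H(x)+1)|∇H(x)|² for all x ∈ ℝ²; (iv) the zero set of b₁ is exactly {(−2,0), (1,0), (0,0)}. -/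

import Mathlib

open scoped RealInnerProductSpace

noncomputable section

/-- `F(x₁) = x₁⁴/4 + x₁³/3 − x₁²`. -/
def Fpot (s : ℝ) : ℝ := s ^ 4 / 4 + s ^ 3 / 3 - s ^ 2

/-- `F'(x₁) = x₁(x₁−1)(x₁+2)`. -/
def Fpot' (s : ℝ) : ℝ := s * (s - 1) * (s + 2)

/-- `H(x₁,x₂) = x₂²/2 + F(x₁)`. -/
def Hfun (x : EuclideanSpace ℝ (Fin 2)) : ℝ := (x 1) ^ 2 / 2 + Fpot (x 0)

/-- The planar vector field `b₁`. -/
def bOne (x : EuclideanSpace ℝ (Fin 2)) : EuclideanSpace ℝ (Fin 2) :=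
  !₂[x 1 - Fpot' (x 0) * (Hfun x + 1), -Fpot' (x 0) - x 1 * (Hfun x + 1)]

/-- `U = H²/2 + H`. -/
def Ufun (x : EuclideanSpace ℝ (Fin 2)) : ℝ := (Hfun x) ^ 2 / 2 + Hfun x

/-- `l(x₁,x₂) = (x₂, −F'(x₁))`. -/
def lfun (x : EuclideanSpace ℝ (Fin 2)) : EuclideanSpace ℝ (Fin 2) :=
  !₂[x 1, -Fpot' (x 0)]

lemma hasDerivAt_Fpot (s : ℝ) : HasDerivAt Fpot (Fpot' s) s := by
  have h := (((hasDerivAt_pow 4 s).div_const 4).add ((hasDerivAt_pow 3 s).div_const 3)).sub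
    (hasDerivAt_pow 2 s)
  unfold Fpot Fpot'
  exact h.congr_deriv (by norm_num; ring)

/-- The gradient of `H`. -/
def gH (x : EuclideanSpace ℝ (Fin 2)) : EuclideanSpace ℝ (Fin 2) := !₂[Fpot' (x 0), x 1]

lemma proj_hasFDerivAt (i : Fin 2) (x : EuclideanSpace ℝ (Fin 2)) :
    HasFDerivAt (fun y : EuclideanSpace ℝ (Fin 2) => y i)
      (EuclideanSpace.proj i : EuclideanSpace ℝ (Fin 2) →L[ℝ] ℝ) x := by
  simpa using
    (EuclideanSpace.proj i : EuclideanSpace ℝ (Fin 2) →L[ℝ] ℝ).hasFDerivAt (x := x)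

lemma hasGradientAt_H (x : EuclideanSpace ℝ (Fin 2)) : HasGradientAt Hfun (gH x) x := by
  rw [hasGradientAt_iff_hasFDerivAt]
  have h1 : HasDerivAt (fun t : ℝ => t ^ 2 / 2) (x 1) (x 1) := by
    simpa using (hasDerivAt_pow 2 (x 1)).div_const 2
  have hp1 := h1.comp_hasFDerivAt x (proj_hasFDerivAt 1 x)
  have hp0 := (hasDerivAt_Fpot (x 0)).comp_hasFDerivAt x (proj_hasFDerivAt 0 x)
  have h := hp1.add hp0
  refine h.congr_fderiv ?_
  ext v
  simp [InnerProductSpace.toDual_apply_apply, PiLp.inner_apply, Fin.sum_univ_two, gH]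
  ring

lemma hasGradientAt_U (x : EuclideanSpace ℝ (Fin 2)) :
    HasGradientAt Ufun ((Hfun x + 1) • gH x) x := by
  rw [hasGradientAt_iff_hasFDerivAt]
  have hφ : HasDerivAt (fun t : ℝ => t ^ 2 / 2 + t) (Hfun x + 1) (Hfun x) := by
    exact (((hasDerivAt_pow 2 (Hfun x)).div_const 2).add (hasDerivAt_id (Hfun x))).congr_deriv (by norm_num)
  have h := hφ.comp_hasFDerivAt x (hasGradientAt_H x).hasFDerivAt
  rw [map_smul]
  exact h

lemma Fpot'_zero_iff (s : ℝ) : Fpot' s = 0 ↔ s = -2 ∨ s = 1 ∨ s = 0 := by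
  unfold Fpot'
  rw [mul_eq_zero, mul_eq_zero]
  constructor
  · rintro ((h | h) | h)
    · exact Or.inr (Or.inr h)
    · exact Or.inr (Or.inl (by linarith))
    · exact Or.inl (by linarith)
  · rintro (h | h | h) <;> subst h <;> norm_num

/-- Structure of the planar polynomial system `dx/dt = b₁(x)`:
`F'` is the derivative of `F`; `⟨∇U, l⟩ ≡ 0`; `b₁ = −∇U + l`;
`⟨∇H, b₁⟩ = −(H+1)|∇H|²`; and the zero set of `b₁` is `{(−2,0), (1,0), (0,0)}`. -/
theorem planar_system_structure :
    (∀ s : ℝ, deriv Fpot s = Fpot' s) ∧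
    (∀ x : EuclideanSpace ℝ (Fin 2), ⟪gradient Ufun x, lfun x⟫ = 0) ∧
    (∀ x : EuclideanSpace ℝ (Fin 2), bOne x = -gradient Ufun x + lfun x) ∧
    (∀ x : EuclideanSpace ℝ (Fin 2),
      ⟪gradient Hfun x, bOne x⟫ = -(Hfun x + 1) * ‖gradient Hfun x‖ ^ 2) ∧
    { x : EuclideanSpace ℝ (Fin 2) | bOne x = 0 }
      = {!₂[-2, 0], !₂[1, 0], !₂[0, 0]} := by
  have hgH : ∀ x, gradient Hfun x = gH x := fun x => (hasGradientAt_H x).gradient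
  have hgU : ∀ x, gradient Ufun x = (Hfun x + 1) • gH x := fun x => (hasGradientAt_U x).gradient
  refine ⟨fun s => (hasDerivAt_Fpot s).deriv, ?_, ?_, ?_, ?_⟩
  · intro x
    rw [hgU]
    simp [PiLp.inner_apply, Fin.sum_univ_two, gH, lfun, PiLp.smul_apply, smul_eq_mul]
    ring
  · intro x
    rw [hgU]
    ext i
    fin_cases i <;>
      simp [bOne, gH, lfun, PiLp.add_apply, PiLp.neg_apply, PiLp.smul_apply, smul_eq_mul] <;>
      ring
  · intro x
    rw [hgH, ← real_inner_self_eq_norm_sq]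
    simp [PiLp.inner_apply, Fin.sum_univ_two, gH, bOne, EuclideanSpace.norm_eq, Real.sq_sqrt, add_nonneg, sq_nonneg]
    ring
  · ext x
    simp only [Set.mem_setOf_eq, Set.mem_insert_iff, Set.mem_singleton_iff]
    constructor
    · intro h
      have h0 : bOne x 0 = 0 := by rw [h]; rfl
      have h1 : bOne x 1 = 0 := by rw [h]; rfl
      simp only [bOne, Matrix.cons_val_zero, Matrix.cons_val_one, Matrix.head_cons, PiLp.toLp_apply] at h0 h1
      have ha : Fpot' (x 0) = 0 := by
        have key : Fpot' (x 0) * (1 + (Hfun x + 1) ^ 2) = 0 := by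
          have h2 : x 1 = Fpot' (x 0) * (Hfun x + 1) := by linarith
          rw [h2] at h1
          linear_combination -h1
        have hpos : (0:ℝ) < 1 + (Hfun x + 1) ^ 2 := by positivity
        exact (mul_eq_zero.mp key).resolve_right (ne_of_gt hpos)
      have hb : x 1 = 0 := by
        rw [ha] at h0; linarith
      have := (Fpot'_zero_iff (x 0)).mp ha
      rcases this with h | h | h
      · left; ext i; fin_cases i <;> simp [h, hb]
      · right; left; ext i; fin_cases i <;> simp [h, hb]
      · right; right; ext i; fin_cases i <;> simp [h, hb]
    · intro h
      have hz : Fpot' (x 0) = 0 ∧ x 1 = 0 := by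
        rcases h with h | h | h <;> rw [h] <;> simp [Fpot']
      ext i
      fin_cases i <;> simp [bOne, hz.1, hz.2]


end
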